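/- arXiv:1602.08485 — 5 statements merged into one kernel-verified Lean document; each statement's English description precedes it below -/
import Mathlib

section
/- Let λ = (λ_1,...,λ_d) ∈ ℂ^d with Σ_{j=1}^d |λ_j|^2 = 1, and let S be a bounded operator on a Hilbert space H satisfying S^{q_1} Σ_{k=0}^{m} (-1)^k C(m,k) S^{*k} S^k = 0 (i.e., S is an (m,q_1)-partial isometry). Define T_j = λ_j S for j = 1,...,d and q = (q_1,...,q_d). Then the commuting tuple T = (T_1,...,T_d) satisfies T^q Σ_{k=0}^{m} (-1)^k C(m,k) Σ_{|α|=k} (k!/α!) T^{*α} T^{α} = 0, i.e., T is a joint (m;(q_1,...,q_d))-partial isometry. -/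
/-! For `T = λ • S` one has `T^{*α} T^α = conj(λ)^α λ^α • S^{*k} S^k` with `k = |α|`, so by the
multinomial theorem the `|α| = k` layer of the joint defect is `(Σ |λ_j|²)^k • S^{*k} S^k`, i.e. just
`S^{*k} S^k`. Hence the joint operator is `λ^q • S^{|q|} Δ_m(S)`, where `Δ_m(S)` is the
one-variable defect, and `S^{|q|} Δ_m(S) = S^{|q| - q_1} (S^{q_1} Δ_m(S)) = 0`. -/

open Finset ContinuousLinearMap Filter

variable {H : Type*} [NormedAddCommGroup H] [InnerProductSpace ℂ H] [CompleteSpace H]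

/-- `opPow T α = T 0 ^ α 0 * ⋯ * T (d-1) ^ α (d-1)`. -/
noncomputable def opPow {d : ℕ} (T : Fin d → H →L[ℂ] H) (α : Fin d → ℕ) : H →L[ℂ] H :=
  (List.ofFn fun j => (T j) ^ (α j)).prod

/-- The operator `T^q * Σ_{k=0}^m (-1)^k C(m,k) Σ_{|α|=k} (k!/α!) T^{*α} T^α`; the tuple `T`
is a joint `(m;(q_1,…,q_d))`-partial isometry iff this operator vanishes. -/
noncomputable def jpiOp {d : ℕ} (m : ℕ) (q : Fin d → ℕ) (T : Fin d → H →L[ℂ] H) :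
    H →L[ℂ] H :=
  opPow T q *
    ∑ k ∈ Finset.range (m + 1), ((-1 : ℂ) ^ k * (m.choose k : ℂ)) •
      ∑ α ∈ Finset.Nat.antidiagonalTuple d k,
        (Nat.multinomial Finset.univ α : ℂ) •
          (opPow (fun j => ContinuousLinearMap.adjoint (T j)) α * opPow T α)

/-- `S` is an `(m,p)`-partial isometry iff `S ^ p * isometryDefect m S = 0`. -/
noncomputable def isometryDefect (m : ℕ) (S : H →L[ℂ] H) : H →L[ℂ] H :=
  ∑ k ∈ Finset.range (m + 1), ((-1 : ℂ) ^ k * (m.choose k : ℂ)) •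
    (ContinuousLinearMap.adjoint (S ^ k) * S ^ k)

lemma adjoint_pow (S : H →L[ℂ] H) (k : ℕ) :
    ContinuousLinearMap.adjoint (S ^ k) = ContinuousLinearMap.adjoint S ^ k := by
  simp only [← ContinuousLinearMap.star_eq_adjoint, star_pow]

lemma opPow_smul_const {E : Type*} [NormedAddCommGroup E] [InnerProductSpace ℂ E] {d : ℕ}
    (c : Fin d → ℂ) (S : E →L[ℂ] E) (α : Fin d → ℕ) :
    opPow (fun j => c j • S) α = (∏ j, c j ^ α j) • S ^ (∑ j, α j) := by
  induction d with
  | zero => simp [opPow]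
  | succ n ih =>
      have := ih (fun j => c j.succ) (fun j => α j.succ)
      simp only [opPow, List.ofFn_succ, List.prod_cons] at this ⊢
      rw [this, smul_pow, Fin.prod_univ_succ, Fin.sum_univ_succ, pow_add,
        smul_mul_assoc, mul_smul_comm, smul_smul]

/-- The multinomial theorem collapses the `|α| = k` layer of `jpiOp` for `T = c • S`. -/
lemma sum_multinomial_opPow_adjoint_smul_const {d : ℕ} (c : Fin d → ℂ) (S : H →L[ℂ] H)
    (k : ℕ) :
    ∑ α ∈ Finset.Nat.antidiagonalTuple d k, (Nat.multinomial Finset.univ α : ℂ) •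
        (opPow (fun j => ContinuousLinearMap.adjoint (c j • S)) α * opPow (fun j => c j • S) α)
      = (∑ j, starRingEnd ℂ (c j) * c j) ^ k •
          (ContinuousLinearMap.adjoint (S ^ k) * S ^ k) := by
  have hadj : (fun j => ContinuousLinearMap.adjoint (c j • S))
      = fun j => starRingEnd ℂ (c j) • ContinuousLinearMap.adjoint S := by
    funext j
    exact map_smulₛₗ _ _ _
  have hterm : ∀ α ∈ Finset.Nat.antidiagonalTuple d k,
      (Nat.multinomial Finset.univ α : ℂ) •
          (opPow (fun j => starRingEnd ℂ (c j) • ContinuousLinearMap.adjoint S) α *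
            opPow (fun j => c j • S) α)
        = ((Nat.multinomial Finset.univ α : ℂ) *
            ∏ j, (starRingEnd ℂ (c j) * c j) ^ α j) •
          (ContinuousLinearMap.adjoint S ^ k * S ^ k) := by
    intro α hα
    rw [opPow_smul_const, opPow_smul_const, Finset.Nat.mem_antidiagonalTuple.mp hα,
      smul_mul_assoc, mul_smul_comm, smul_smul, smul_smul, mul_assoc,
      ← Finset.prod_mul_distrib]
    simp_rw [← mul_pow]
  rw [hadj, Finset.sum_congr rfl hterm, ← Finset.sum_smul,
    ← Finset.piAntidiag_univ_fin_eq_antidiagonalTuple, ← Finset.sum_pow_eq_sum_piAntidiag,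
    adjoint_pow]

lemma sum_conj_mul_self_eq_one {d : ℕ} {c : Fin d → ℂ} (hc : ∑ j, ‖c j‖ ^ 2 = (1 : ℝ)) :
    ∑ j, starRingEnd ℂ (c j) * c j = 1 := by
  simp_rw [mul_comm (starRingEnd ℂ _), Complex.mul_conj, Complex.normSq_eq_norm_sq]
  exact_mod_cast hc

lemma jpiOp_smul_const {d : ℕ} (m : ℕ) (q : Fin d → ℕ) {c : Fin d → ℂ}
    (hc : ∑ j, ‖c j‖ ^ 2 = (1 : ℝ)) (S : H →L[ℂ] H) :
    jpiOp m q (fun j => c j • S)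
      = (∏ j, c j ^ q j) • (S ^ (∑ j, q j) * isometryDefect m S) := by
  simp only [jpiOp, sum_multinomial_opPow_adjoint_smul_const, sum_conj_mul_self_eq_one hc,
    one_pow, one_smul]
  rw [opPow_smul_const, smul_mul_assoc, isometryDefect]

theorem scalar_multiple_jpi {d m : ℕ} (hd : 0 < d) (lam : Fin d → ℂ)
    (hlam : ∑ j, ‖lam j‖ ^ 2 = (1 : ℝ)) (S : H →L[ℂ] H) (q : Fin d → ℕ)
    (hS : S ^ (q ⟨0, hd⟩) *
        ∑ k ∈ Finset.range (m + 1), ((-1 : ℂ) ^ k * (m.choose k : ℂ)) •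
          (ContinuousLinearMap.adjoint (S ^ k) * S ^ k) = 0) :
    jpiOp m q (fun j => lam j • S) = 0 := by
  have hq : q ⟨0, hd⟩ ≤ ∑ j, q j := Finset.single_le_sum (fun _ _ => Nat.zero_le _) (mem_univ _)
  have hS' : S ^ q ⟨0, hd⟩ * isometryDefect m S = 0 := hS
  rw [jpiOp_smul_const m q hlam, pow_mul_eq_zero_of_le hq hS', smul_zero]
end

section
/- Let T = (T_1,...,T_d) be a jointly quasinormal commuting tuple of bounded operators on a Hilbert space H (T_i commutes with T_j^* T_j for all i, j) that is a joint (m;(1,...,1))-partial isometry, so that T_1⋯T_d (I − Σ_{j=1}^d T_j^* T_j)^m = 0. Then T is a joint (1;(1,...,1))-partial isometry: T_1⋯T_d (I − Σ_{j=1}^d T_j^* T_j) = 0. -/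
open Finset ContinuousLinearMap Filter

variable {H : Type*} [NormedAddCommGroup H] [InnerProductSpace ℂ H] [CompleteSpace H]

/-- The exponent drops one step at a time: if `b * a ^ (k + 2) = 0` then
`(b * a ^ (k + 1)) * star (b * a ^ (k + 1)) = b * a ^ (k + 2) * a ^ k * star b = 0`,
and in a C⋆-ring `x * star x = 0` forces `x = 0`. -/
theorem IsSelfAdjoint.mul_eq_zero_of_mul_pow_eq_zero {E : Type*} [NormedRing E] [StarRing E]
    [CStarRing E] {a b : E} (ha : IsSelfAdjoint a) : ∀ {m : ℕ}, b * a ^ m = 0 → b * a = 0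
  | 0, h => by rw [pow_zero, mul_one] at h; rw [h, zero_mul]
  | 1, h => by rwa [pow_one] at h
  | k + 2, h => ha.mul_eq_zero_of_mul_pow_eq_zero (m := k + 1) <| by
      rw [← CStarRing.mul_star_self_eq_zero_iff]
      calc b * a ^ (k + 1) * star (b * a ^ (k + 1))
          = b * a ^ (k + 2) * a ^ k * star b := by
            rw [star_mul, (ha.pow _).star_eq, mul_assoc, ← mul_assoc (a ^ _), ← pow_add,
              show k + 1 + (k + 1) = k + 2 + k by ring, pow_add]
            simp only [mul_assoc]
        _ = 0 := by rw [h, zero_mul, zero_mul]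

theorem jointly_quasinormal_jpi_general {d m : ℕ} (T : Fin d → H →L[ℂ] H)
    (hT : (List.ofFn T).prod *
        (1 - ∑ j, ContinuousLinearMap.adjoint (T j) * T j) ^ m = 0) :
    (List.ofFn T).prod * (1 - ∑ j, ContinuousLinearMap.adjoint (T j) * T j) = 0 := by
  have hA : IsSelfAdjoint (1 - ∑ j, ContinuousLinearMap.adjoint (T j) * T j) :=
    .sub (.one _) <| isSelfAdjoint_sum _ fun j _ => by
      simpa only [star_eq_adjoint] using IsSelfAdjoint.star_mul_self (T j)
  exact hA.mul_eq_zero_of_mul_pow_eq_zero hT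

theorem jointly_quasinormal_jpi {d m : ℕ} (T : Fin d → H →L[ℂ] H)
    (hcomm : ∀ i j, Commute (T i) (T j))
    (hqn : ∀ i j, Commute (T i) (ContinuousLinearMap.adjoint (T j) * T j))
    (hT : (List.ofFn T).prod *
        (1 - ∑ j, ContinuousLinearMap.adjoint (T j) * T j) ^ m = 0) :
    (List.ofFn T).prod * (1 - ∑ j, ContinuousLinearMap.adjoint (T j) * T j) = 0 :=
  jointly_quasinormal_jpi_general T hT
end

section
/- Let T ∈ B(H) satisfy T(I − T^*T)^m = 0 and suppose T commutes with T^*T. Then T(I − T^*T) = 0. -/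
open Finset ContinuousLinearMap Filter

variable {H : Type*} [NormedAddCommGroup H] [InnerProductSpace ℂ H] [CompleteSpace H]

/-!
With `P = 1 - T⋆T`, the hypothesis `T P^m = 0` gives `P^m T⋆ = 0`, hence `P^m (1 - P) = P^m T⋆T = 0`.
So the self-adjoint element `P (1 - P)` is nilpotent, and in a C⋆-algebra that forces `P² = P`.
Then `(TP)⋆(TP) = P T⋆T P = P (1 - P) P = 0`, and the C⋆-identity gives `TP = 0`.
-/

section CStarRing

variable {E : Type*} [NormedRing E] [StarRing E] [CStarRing E]

theorem IsSelfAdjoint.eq_zero_of_pow_eq_zero {a : E} (ha : IsSelfAdjoint a) {n : ℕ}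
    (h : a ^ n = 0) : a = 0 := by
  have h2 : a ^ 2 ^ n = 0 := pow_eq_zero_of_le Nat.lt_two_pow_self.le h
  have hnorm : ‖a‖₊ ^ 2 ^ n = 0 := by rw [← ha.nnnorm_pow_two_pow, h2, nnnorm_zero]
  exact nnnorm_eq_zero.mp (pow_eq_zero_iff (by positivity) |>.mp hnorm)

theorem IsSelfAdjoint.isIdempotentElem_of_pow_mul_one_sub_eq_zero {p : E} (hp : IsSelfAdjoint p)
    {m : ℕ} (h : p ^ m * (1 - p) = 0) : IsIdempotentElem p := by
  have hcomm : Commute p (1 - p) := (Commute.one_right p).sub_right (Commute.refl p)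
  have hnil : (p * (1 - p)) ^ (m + 1) = 0 := by
    rw [hcomm.mul_pow, pow_succ', pow_succ' (1 - p), mul_assoc, ← mul_assoc (p ^ m), h,
      zero_mul, mul_zero]
  have hsa : IsSelfAdjoint (p * (1 - p)) :=
    (hp.commute_iff ((IsSelfAdjoint.one E).sub hp)).mp hcomm
  have := hsa.eq_zero_of_pow_eq_zero hnil
  rwa [mul_one_sub, sub_eq_zero, eq_comm] at this

theorem mul_one_sub_star_mul_self_eq_zero_of_isIdempotentElem {a : E}
    (h : IsIdempotentElem (1 - star a * a)) : a * (1 - star a * a) = 0 := by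
  set p := 1 - star a * a with hp_def
  have hp : IsSelfAdjoint p := (IsSelfAdjoint.one E).sub (IsSelfAdjoint.star_mul_self a)
  have hstar : star a * a = 1 - p := by rw [hp_def, sub_sub_cancel]
  rw [← CStarRing.star_mul_self_eq_zero_iff]
  calc star (a * p) * (a * p) = p * (star a * a) * p := by
        rw [star_mul, hp.star_eq, mul_assoc, mul_assoc, mul_assoc]
    _ = (p - p * p) * p := by rw [hstar, mul_one_sub p p]
    _ = 0 := by rw [h.eq, sub_self, zero_mul]

theorem mul_one_sub_star_mul_self_eq_zero_of_mul_pow_eq_zero {a : E} {m : ℕ}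
    (h : a * (1 - star a * a) ^ m = 0) : a * (1 - star a * a) = 0 := by
  set p := 1 - star a * a with hp_def
  have hp : IsSelfAdjoint p := (IsSelfAdjoint.one E).sub (IsSelfAdjoint.star_mul_self a)
  have hstar : p ^ m * star a = 0 := by
    simpa only [star_mul, star_pow, hp.star_eq, star_zero] using congrArg star h
  have hker : p ^ m * (1 - p) = 0 := by
    rw [hp_def, sub_sub_cancel, ← mul_assoc, hstar, zero_mul]
  exact mul_one_sub_star_mul_self_eq_zero_of_isIdempotentElem
    (hp.isIdempotentElem_of_pow_mul_one_sub_eq_zero hker)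

end CStarRing

theorem quasinormal_m_partial_isometry_general (m : ℕ) (T : H →L[ℂ] H)
    (hT : T * (1 - ContinuousLinearMap.adjoint T * T) ^ m = 0) :
    T * (1 - ContinuousLinearMap.adjoint T * T) = 0 := by
  rw [← star_eq_adjoint] at hT ⊢
  exact mul_one_sub_star_mul_self_eq_zero_of_mul_pow_eq_zero hT

theorem quasinormal_m_partial_isometry (m : ℕ) (hm : 1 ≤ m) (T : H →L[ℂ] H)
    (hc : Commute T (ContinuousLinearMap.adjoint T * T))
    (hT : T * (1 - ContinuousLinearMap.adjoint T * T) ^ m = 0) :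
    T * (1 - ContinuousLinearMap.adjoint T * T) = 0 :=
  quasinormal_m_partial_isometry_general m T hT
end

section
/- Let T = (T_1,...,T_d) be a commuting tuple of bounded operators on a Hilbert space H, m ∈ ℕ, q ∈ ℤ_+^d, such that ker(T^q) is a reducing subspace for each T_j (i.e., ker(T^q) is invariant under each T_j and each T_j^*). Then T is a joint (m;(q_1,...,q_d))-partial isometry if and only if for all x ∈ H: Σ_{k=0}^m (-1)^k C(m,k) Σ_{|α|=k} (k!/α!) ‖T^α T^{*q} x‖² = 0. -/
/-!
Write `jpiOp m q T = A * S` with `A = T^q` and `S` the defect operator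
`Σ_k (-1)^k C(m,k) Σ_{|α|=k} (k!/α!) T^{*α} T^α`. Since `⟪A S A* x, x⟫ = ⟪S A* x, A* x⟫` is the
alternating sum of norms in the statement, and a complex operator vanishes once its quadratic
form does, the norm identity says exactly `A S A* = 0`. Because `ker A` reduces every `T_j`, `S`
leaves `ker A` invariant, so `A S` vanishes on `ker A`; `A S A* = 0` makes it vanish on the range
of `A*`, whose closure is `(ker A)ᗮ`. Hence `A S = 0`.
-/

open Finset ContinuousLinearMap Filter

variable {H : Type*} [NormedAddCommGroup H] [InnerProductSpace ℂ H] [CompleteSpace H]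

open scoped InnerProductSpace

theorem star_list_prod {M : Type*} [Monoid M] [StarMul M] (l : List M) :
    star l.prod = (l.map star).reverse.prod := by
  induction l with
  | nil => simp
  | cons a l ih => simp [ih]

theorem mapsTo_list_prod {R M : Type*} [Semiring R] [TopologicalSpace M] [AddCommMonoid M]
    [Module R M] {s : Set M} (l : List (M →L[R] M)) (h : ∀ B ∈ l, Set.MapsTo B s s) :
    Set.MapsTo l.prod s s :=
  let invariant : Submonoid (M →L[R] M) :=
    { carrier := {B | Set.MapsTo B s s}
      mul_mem' := fun hA hB => hA.comp hB
      one_mem' := Set.mapsTo_id s }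
  invariant.list_prod_mem h

theorem mul_eq_zero_iff_mul_mul_adjoint_eq_zero {𝕜 E : Type*} [RCLike 𝕜] [NormedAddCommGroup E]
    [InnerProductSpace 𝕜 E] [CompleteSpace E] {A S : E →L[𝕜] E}
    (hS : Set.MapsTo S A.ker A.ker) :
    A * S = 0 ↔ A * S * adjoint A = 0 := by
  refine ⟨fun h => by rw [h, zero_mul], fun h => ?_⟩
  have hker : A.ker ≤ (A * S).ker := fun x hx => hS hx
  have hrange : (adjoint A).range ≤ (A * S).ker := by
    rintro _ ⟨y, rfl⟩
    exact congr($h y)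
  have hclosure := Submodule.topologicalClosure_minimal _ hrange (A * S).isClosed_ker
  rw [← orthogonal_ker] at hclosure
  have htop : (A * S).ker = ⊤ := by
    rw [eq_top_iff, ← A.ker.sup_orthogonal_of_hasOrthogonalProjection]
    exact sup_le hker hclosure
  ext x
  simpa using htop.ge (Submodule.mem_top (x := x))

theorem eq_zero_iff_forall_inner_map_self_eq_zero {E : Type*} [NormedAddCommGroup E]
    [InnerProductSpace ℂ E] (B : E →L[ℂ] E) : B = 0 ↔ ∀ x, ⟪B x, x⟫_ℂ = 0 :=
  ((inner_map_self_eq_zero _).trans (coe_inj (g := 0))).symm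

section

variable {E : Type*} [NormedAddCommGroup E] [InnerProductSpace ℂ E] {d : ℕ}

theorem mapsTo_opPow {S : Fin d → E →L[ℂ] E} {s : Set E} (h : ∀ j, Set.MapsTo (S j) s s)
    (α : Fin d → ℕ) : Set.MapsTo (opPow S α) s s := by
  refine mapsTo_list_prod _ fun B hB => ?_
  obtain ⟨j, rfl⟩ := List.mem_ofFn.1 hB
  rw [FunLike.coe_pow_eq_iterate]
  exact (h j).iterate _

theorem adjoint_opPow [CompleteSpace E] {T : Fin d → E →L[ℂ] E}
    (hcomm : ∀ i j, Commute (T i) (T j)) (α : Fin d → ℕ) :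
    adjoint (opPow T α) = opPow (fun j => adjoint (T j)) α := by
  rw [← star_eq_adjoint, opPow, opPow, star_list_prod, List.map_ofFn]
  simp only [Function.comp_def, star_pow, star_eq_adjoint]
  refine List.Perm.prod_eq' (List.reverse_perm _) (List.pairwise_reverse.2 <|
    List.pairwise_of_forall_mem_list fun a ha b hb => ?_)
  obtain ⟨i, rfl⟩ := List.mem_ofFn.1 ha
  obtain ⟨j, rfl⟩ := List.mem_ofFn.1 hb
  exact (hcomm j i).star_star.pow_pow _ _

noncomputable def jointIsometryDefect [CompleteSpace E] (m : ℕ) (T : Fin d → E →L[ℂ] E) :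
    E →L[ℂ] E :=
  ∑ k ∈ Finset.range (m + 1), ((-1 : ℂ) ^ k * (m.choose k : ℂ)) •
    ∑ α ∈ Finset.Nat.antidiagonalTuple d k,
      (Nat.multinomial Finset.univ α : ℂ) • (opPow (fun j => adjoint (T j)) α * opPow T α)

theorem jpiOp_eq_mul [CompleteSpace E] (m : ℕ) (q : Fin d → ℕ) (T : Fin d → E →L[ℂ] E) :
    jpiOp m q T = opPow T q * jointIsometryDefect m T :=
  rfl

theorem mapsTo_jointIsometryDefect [CompleteSpace E] (m : ℕ) {T : Fin d → E →L[ℂ] E}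
    {p : Submodule ℂ E} (h : ∀ j, Set.MapsTo (T j) p p)
    (h' : ∀ j, Set.MapsTo (adjoint (T j)) p p) :
    Set.MapsTo (jointIsometryDefect m T) p p := fun x hx => by
  simp only [jointIsometryDefect, _root_.sum_apply, smul_apply, mul_apply_eq_comp]
  exact p.sum_mem fun k _ => p.smul_mem _ <| p.sum_mem fun α _ =>
    p.smul_mem _ (mapsTo_opPow h' α (mapsTo_opPow h α hx))

theorem inner_jointIsometryDefect_apply_self [CompleteSpace E] (m : ℕ) {T : Fin d → E →L[ℂ] E}
    (hcomm : ∀ i j, Commute (T i) (T j)) (y : E) :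
    ⟪jointIsometryDefect m T y, y⟫_ℂ =
      ((∑ k ∈ Finset.range (m + 1), ((-1 : ℝ) ^ k * (m.choose k : ℝ)) *
        ∑ α ∈ Finset.Nat.antidiagonalTuple d k,
          (Nat.multinomial Finset.univ α : ℝ) * ‖opPow T α y‖ ^ 2 : ℝ) : ℂ) := by
  simp only [jointIsometryDefect, _root_.sum_apply, smul_apply, mul_apply_eq_comp, sum_inner,
    inner_smul_left, ← adjoint_opPow hcomm, adjoint_inner_left, inner_self_eq_norm_sq_to_K]
  push_cast
  simp [Finset.mul_sum]

end

theorem jpi_iff_norm_identity {d m : ℕ} (q : Fin d → ℕ) (T : Fin d → H →L[ℂ] H)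
    (hcomm : ∀ i j, Commute (T i) (T j))
    (hred : ∀ (j : Fin d) (x : H), opPow T q x = 0 →
      opPow T q (T j x) = 0 ∧ opPow T q (ContinuousLinearMap.adjoint (T j) x) = 0) :
    jpiOp m q T = 0 ↔
      ∀ x : H,
        ∑ k ∈ Finset.range (m + 1), ((-1 : ℝ) ^ k * (m.choose k : ℝ)) *
          ∑ α ∈ Finset.Nat.antidiagonalTuple d k,
            (Nat.multinomial Finset.univ α : ℝ) *
              ‖opPow T α (ContinuousLinearMap.adjoint (opPow T q) x)‖ ^ 2 = 0 := by
  have hker : Set.MapsTo (jointIsometryDefect m T) (opPow T q).ker (opPow T q).ker :=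
    mapsTo_jointIsometryDefect m (fun j x hx => (hred j x hx).1) (fun j x hx => (hred j x hx).2)
  rw [jpiOp_eq_mul, mul_eq_zero_iff_mul_mul_adjoint_eq_zero hker,
    eq_zero_iff_forall_inner_map_self_eq_zero]
  refine forall_congr' fun x => ?_
  rw [mul_apply_eq_comp, mul_apply_eq_comp, ← adjoint_inner_right,
    inner_jointIsometryDefect_apply_self m hcomm, Complex.ofReal_eq_zero]
end

section
/- Let T = (T_1,...,T_d) be a commuting tuple of bounded operators on H that is a joint (m;(q_1,...,q_d))-partial isometry with ker(T^q) reducing each T_j. Let x and y be joint eigenvectors: T_j x = λ_j x and T_j y = μ_j y for all j, with λ ≠ μ and λ_1⋯λ_d ≠ 0 and Σ_j λ_j conj(μ_j) ≠ 1. Then ⟨x, y⟩ = 0. -/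
/-! Since `ker T^q` reduces every `T_j`, its orthogonal projection commutes with `T^q`; as
`T^q x = λ^q x` with `λ^q ≠ 0`, this forces `x ⊥ ker T^q`. The defect operator
`D = Σ_k (-1)^k C(m,k) Σ_{|α|=k} (k!/α!) T^{*α} T^α` preserves `(ker T^q)ᗮ`, and it maps into
`ker T^q` because `T^q D = 0`; hence `D x = 0`. On the other hand the multinomial theorem gives
`⟨y, D x⟩ = (1 - Σ_j λ_j conj μ_j)^m ⟨y, x⟩`. -/

open Finset ContinuousLinearMap Filter

variable {H : Type*} [NormedAddCommGroup H] [InnerProductSpace ℂ H] [CompleteSpace H]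

namespace Submodule

variable {𝕜 E : Type*} [RCLike 𝕜] [NormedAddCommGroup E] [InnerProductSpace 𝕜 E]
  {K : Submodule 𝕜 E} [K.HasOrthogonalProjection] {A : E →L[𝕜] E}

lemma commute_starProjection_of_mapsTo (hK : Set.MapsTo A K K) (hKperp : Set.MapsTo A Kᗮ Kᗮ) :
    Commute K.starProjection A := by
  ext v
  have hmem : K.starProjection (A (K.starProjection v)) = A (K.starProjection v) :=
    starProjection_eq_self_iff.mpr (hK (K.starProjection_apply_mem v))
  have hperp : K.starProjection (A (v - K.starProjection v)) = 0 :=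
    K.starProjection_apply_eq_zero_iff.mpr (hKperp (K.sub_starProjection_mem_orthogonal v))
  rw [map_sub, map_sub, hmem, sub_eq_zero] at hperp
  simpa only [mul_apply_eq_comp] using hperp

lemma mem_orthogonal_of_apply_eq_smul (hA : Commute K.starProjection A) (hK : ∀ u ∈ K, A u = 0)
    {c : 𝕜} (hc : c ≠ 0) {v : E} (hv : A v = c • v) : v ∈ Kᗮ := by
  rw [← K.starProjection_apply_eq_zero_iff]
  have h := congr($(hA.eq) v)
  rw [mul_apply_eq_comp, mul_apply_eq_comp, hv, map_smul, hK _ (K.starProjection_apply_mem v)] at h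
  exact (smul_eq_zero.mp h).resolve_left hc

end Submodule

lemma one_sub_sum_pow_eq {R : Type*} [CommRing R] {d : ℕ} (z : Fin d → R) (m : ℕ) :
    (1 - ∑ j, z j) ^ m = ∑ k ∈ range (m + 1), ((-1) ^ k * m.choose k) *
      ∑ α ∈ Nat.antidiagonalTuple d k, (Nat.multinomial univ α : R) * ∏ j, z j ^ α j := by
  simp_rw [← piAntidiag_univ_fin_eq_antidiagonalTuple, ← sum_pow_eq_sum_piAntidiag,
    sub_eq_neg_add, add_pow]
  refine sum_congr rfl fun k _ => ?_
  rw [one_pow, neg_pow]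
  ring

section

variable {E : Type*} [NormedAddCommGroup E] [InnerProductSpace ℂ E]

lemma opPow_succ {d : ℕ} (T : Fin (d + 1) → E →L[ℂ] E) (α : Fin (d + 1) → ℕ) :
    opPow T α = T 0 ^ α 0 * opPow (fun j => T j.succ) (fun j => α j.succ) := by
  simp [opPow, List.ofFn_succ]

lemma pow_apply_of_apply_eq_smul {A : E →L[ℂ] E} {a : ℂ} {v : E} (hv : A v = a • v) (n : ℕ) :
    (A ^ n) v = a ^ n • v := by
  induction n with
  | zero => simp
  | succ n ih => rw [pow_succ, mul_apply_eq_comp, hv, map_smul, ih, smul_smul, pow_succ']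

lemma opPow_apply_of_eigenvector {d : ℕ} {T : Fin d → E →L[ℂ] E} {c : Fin d → ℂ} {v : E}
    (hv : ∀ j, T j v = c j • v) (α : Fin d → ℕ) :
    opPow T α v = (∏ j, c j ^ α j) • v := by
  induction d with
  | zero => simp [opPow]
  | succ d ih =>
    rw [opPow_succ, mul_apply_eq_comp, ih (fun j => hv j.succ), map_smul,
      pow_apply_of_apply_eq_smul (hv 0), smul_smul, Fin.prod_univ_succ, mul_comm]

lemma Commute.opPow_right {d : ℕ} {A : E →L[ℂ] E} {T : Fin d → E →L[ℂ] E}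
    (h : ∀ j, Commute A (T j)) (α : Fin d → ℕ) : Commute A (opPow T α) :=
  Commute.list_prod_right _ _ fun B hB => by
    obtain ⟨j, rfl⟩ := List.mem_ofFn.mp hB
    exact (h j).pow_right _

lemma opPow_mapsTo {d : ℕ} {T : Fin d → E →L[ℂ] E} {W : Set E} (h : ∀ j, Set.MapsTo (T j) W W)
    (α : Fin d → ℕ) : Set.MapsTo (opPow T α) W W := by
  refine List.prod_induction (fun A : E →L[ℂ] E => Set.MapsTo A W W)
    (fun A B hA hB => by rw [FunLike.coe_mul_eq_comp]; exact hA.comp hB) (Set.mapsTo_id W)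
    fun B hB => ?_
  obtain ⟨j, rfl⟩ := List.mem_ofFn.mp hB
  rw [FunLike.coe_pow_eq_iterate]
  exact (h j).iterate _

variable [CompleteSpace E]

lemma inner_opPow_adjoint_of_eigenvector {d : ℕ} {T : Fin d → E →L[ℂ] E} {c : Fin d → ℂ}
    {w : E} (hw : ∀ j, T j w = c j • w) (α : Fin d → ℕ) (z : E) :
    inner ℂ w (opPow (fun j => adjoint (T j)) α z) =
      (∏ j, starRingEnd ℂ (c j) ^ α j) * inner ℂ w z := by
  induction d generalizing z with
  | zero => simp [opPow]
  | succ d ih =>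
    rw [opPow_succ, mul_apply_eq_comp, ← star_eq_adjoint, ← star_pow, star_eq_adjoint,
      adjoint_inner_right, pow_apply_of_apply_eq_smul (hw 0), inner_smul_left,
      ih (fun j => hw j.succ), Fin.prod_univ_succ, map_pow, mul_assoc]

noncomputable def jpiDefect {d : ℕ} (m : ℕ) (T : Fin d → E →L[ℂ] E) : E →L[ℂ] E :=
  ∑ k ∈ range (m + 1), ((-1 : ℂ) ^ k * (m.choose k : ℂ)) •
    ∑ α ∈ Nat.antidiagonalTuple d k,
      (Nat.multinomial univ α : ℂ) • (opPow (fun j => adjoint (T j)) α * opPow T α)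

lemma jpiOp_eq_mul_jpiDefect {d : ℕ} (m : ℕ) (q : Fin d → ℕ) (T : Fin d → E →L[ℂ] E) :
    jpiOp m q T = opPow T q * jpiDefect m T :=
  rfl

lemma jpiDefect_mapsTo {d m : ℕ} {T : Fin d → E →L[ℂ] E} {W : Submodule ℂ E}
    (h : ∀ j, Set.MapsTo (T j) W W) (h' : ∀ j, Set.MapsTo (adjoint (T j)) W W) :
    Set.MapsTo (jpiDefect m T) W W := by
  intro v hv
  simp only [jpiDefect, _root_.sum_apply, smul_apply, mul_apply_eq_comp]
  exact W.sum_mem fun k _ => W.smul_mem _ <| W.sum_mem fun α _ => W.smul_mem _ <|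
    opPow_mapsTo h' α (opPow_mapsTo h α hv)

lemma inner_jpiDefect_apply_of_eigenvector {d : ℕ} (m : ℕ) {T : Fin d → E →L[ℂ] E}
    {lam mu : Fin d → ℂ} {x y : E} (hx : ∀ j, T j x = lam j • x) (hy : ∀ j, T j y = mu j • y) :
    inner ℂ y (jpiDefect m T x) = (1 - ∑ j, lam j * starRingEnd ℂ (mu j)) ^ m * inner ℂ y x := by
  have hterm (α : Fin d → ℕ) : inner ℂ y (opPow (fun j => adjoint (T j)) α (opPow T α x)) =
      (∏ j, (lam j * starRingEnd ℂ (mu j)) ^ α j) * inner ℂ y x := by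
    rw [inner_opPow_adjoint_of_eigenvector hy, opPow_apply_of_eigenvector hx, inner_smul_right,
      ← mul_assoc, ← prod_mul_distrib]
    simp_rw [mul_pow, mul_comm]
  simp only [jpiDefect, _root_.sum_apply, smul_apply, mul_apply_eq_comp, inner_sum,
    inner_smul_right, hterm, one_sub_sum_pow_eq, sum_mul, mul_assoc]

end

theorem jpi_eigenvectors_orthogonal_general {d m : ℕ} (q : Fin d → ℕ)
    (T : Fin d → H →L[ℂ] H)
    (hT : jpiOp m q T = 0)
    (hred : ∀ (j : Fin d) (x : H), opPow T q x = 0 →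
      opPow T q (T j x) = 0 ∧ opPow T q (ContinuousLinearMap.adjoint (T j) x) = 0)
    (lam mu : Fin d → ℂ) (x y : H)
    (heigx : ∀ j, T j x = lam j • x) (heigy : ∀ j, T j y = mu j • y)
    (hlam : (∏ j, lam j) ≠ 0)
    (hsum : ∑ j, lam j * (starRingEnd ℂ) (mu j) ≠ 1) :
    (inner ℂ x y : ℂ) = 0 := by
  set K : Submodule ℂ H := LinearMap.ker (opPow T q : H →ₗ[ℂ] H)
  have : CompleteSpace K := (isClosed_ker (opPow T q)).completeSpace_coe
  have hK (j : Fin d) : Set.MapsTo (T j) K K := fun v hv => (hred j v hv).1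
  have hK' (j : Fin d) : Set.MapsTo (adjoint (T j)) K K := fun v hv => (hred j v hv).2
  have hKperp (j : Fin d) : Set.MapsTo (T j) Kᗮ Kᗮ := orthogonal_mem_invtSubmodule (hK' j)
  have hKperp' (j : Fin d) : Set.MapsTo (adjoint (T j)) Kᗮ Kᗮ := by
    refine orthogonal_mem_invtSubmodule (T := adjoint (T j)) ?_
    rw [adjoint_adjoint]
    exact hK j
  have hlam_pow : (∏ j, lam j ^ q j) ≠ 0 :=
    prod_ne_zero_iff.mpr fun j hj => pow_ne_zero _ (prod_ne_zero_iff.mp hlam j hj)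
  have hxperp : x ∈ Kᗮ :=
    K.mem_orthogonal_of_apply_eq_smul
      (Commute.opPow_right (fun j => K.commute_starProjection_of_mapsTo (hK j) (hKperp j)) q)
      (fun _ hu => hu) hlam_pow (opPow_apply_of_eigenvector heigx q)
  have hDx : jpiDefect m T x = 0 := by
    refine Submodule.disjoint_def.mp K.orthogonal_disjoint _ ?_
      (jpiDefect_mapsTo hKperp hKperp' hxperp)
    show opPow T q (jpiDefect m T x) = 0
    rw [← mul_apply_eq_comp, ← jpiOp_eq_mul_jpiDefect, hT, zero_apply]
  have h := inner_jpiDefect_apply_of_eigenvector m heigx heigy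
  rw [hDx, inner_zero_right, eq_comm, mul_eq_zero] at h
  exact inner_eq_zero_symm.mp (h.resolve_left (pow_ne_zero _ (sub_ne_zero.mpr hsum.symm)))

theorem jpi_eigenvectors_orthogonal {d m : ℕ} (q : Fin d → ℕ)
    (T : Fin d → H →L[ℂ] H)
    (hcomm : ∀ i j, Commute (T i) (T j)) (hT : jpiOp m q T = 0)
    (hred : ∀ (j : Fin d) (x : H), opPow T q x = 0 →
      opPow T q (T j x) = 0 ∧ opPow T q (ContinuousLinearMap.adjoint (T j) x) = 0)
    (lam mu : Fin d → ℂ) (x y : H) (hx : x ≠ 0) (hy : y ≠ 0)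
    (heigx : ∀ j, T j x = lam j • x) (heigy : ∀ j, T j y = mu j • y)
    (hne : lam ≠ mu) (hlam : (∏ j, lam j) ≠ 0)
    (hsum : ∑ j, lam j * (starRingEnd ℂ) (mu j) ≠ 1) :
    (inner ℂ x y : ℂ) = 0 :=
  jpi_eigenvectors_orthogonal_general q T hT hred lam mu x y heigx heigy hlam hsum
end
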